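/- arXiv:1712.04590 — 5 statements merged into one kernel-verified Lean document; each statement's English description precedes it below -/
import Mathlib

section
/- For all real numbers a, t, p, the integral over s in (-∞, ∞) of Φ(a(s-t)+p)·φ(s) ds equals Φ((p-at)/√(1+a²)), where φ(s) = e^{-s²/2}/√(2π) is the standard Gaussian density and Φ is its cumulative distribution function. -/
/-!
Write `b = p - a t` and let `γ` be the standard Gaussian measure. Then `Φ(b + a s)` is the
`γ`-mass of `Iic (b - (-a) s)`, so integrating against `γ(ds)` gives the mass of `Iic b` under the
convolution of the image of `γ` by `s ↦ -a s` with `γ`, that is under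
`N(0, a²) ∗ N(0, 1) = N(0, 1 + a²)`; rescaling by `√(1 + a²)` brings this back to `Φ`.
-/

open Real MeasureTheory Set Filter

noncomputable def phi (s : ℝ) : ℝ := Real.exp (-s ^ 2 / 2) / Real.sqrt (2 * Real.pi)

noncomputable def Phi (t : ℝ) : ℝ := ∫ s in Set.Iic t, phi s

open ProbabilityTheory
open scoped NNReal

namespace MeasureTheory.Measure

lemma conv_apply_Iic (μ ν : Measure ℝ) [SFinite ν] (b : ℝ) :
    (μ ∗ ν) (Iic b) = ∫⁻ x, ν (Iic (b - x)) ∂μ := by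
  rw [conv, map_apply (by fun_prop) measurableSet_Iic,
    prod_apply (measurableSet_Iic.preimage (by fun_prop))]
  congr! with x
  ext y
  simp [le_sub_iff_add_le']

lemma antitone_apply_Iic_sub (ν : Measure ℝ) (b : ℝ) : Antitone fun x ↦ ν (Iic (b - x)) :=
  fun _ _ hxy ↦ measure_mono (Iic_subset_Iic.2 (by linarith))

lemma conv_real_Iic (μ ν : Measure ℝ) [IsFiniteMeasure ν] (b : ℝ) :
    (μ ∗ ν).real (Iic b) = ∫ x, ν.real (Iic (b - x)) ∂μ := by
  rw [measureReal_def, conv_apply_Iic, ← integral_toReal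
    (antitone_apply_Iic_sub ν b).measurable.aemeasurable (ae_of_all _ fun _ ↦ measure_lt_top _ _)]
  rfl

end MeasureTheory.Measure

lemma phi_eq_gaussianPDFReal : phi = gaussianPDFReal 0 1 := by
  ext s
  simp [phi, gaussianPDFReal_def, div_eq_inv_mul]

lemma integral_mul_phi (f : ℝ → ℝ) : ∫ s, f s * phi s = ∫ s, f s ∂gaussianReal 0 1 := by
  simp [integral_gaussianReal_eq_integral_smul one_ne_zero, phi_eq_gaussianPDFReal, mul_comm]

lemma Phi_eq_gaussianReal_real_Iic (t : ℝ) : Phi t = (gaussianReal 0 1).real (Iic t) := by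
  rw [measureReal_def, gaussianReal_apply_eq_integral _ one_ne_zero, ENNReal.toReal_ofReal
    (setIntegral_nonneg measurableSet_Iic fun _ _ ↦ gaussianPDFReal_nonneg _ _ _),
    Phi, phi_eq_gaussianPDFReal]

lemma gaussianReal_real_Iic {v : ℝ≥0} (hv : v ≠ 0) (b : ℝ) :
    (gaussianReal 0 v).real (Iic b) = Phi (b / √v) := by
  have hσ : 0 < √(v : ℝ) := by positivity
  have hstd : (gaussianReal 0 v).map (· / √v) = gaussianReal 0 1 := by
    rw [gaussianReal_map_div_const, zero_div]
    congr
    ext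
    simp [hv]
  rw [Phi_eq_gaussianReal_real_Iic, ← hstd, map_measureReal_apply (by fun_prop) measurableSet_Iic]
  congr
  ext x
  simp [div_le_div_iff_of_pos_right hσ]

theorem stmt_0 (a t p : ℝ) :
    ∫ s, Phi (a * (s - t) + p) * phi s = Phi ((p - a * t) / Real.sqrt (1 + a ^ 2)) := by
  calc ∫ s, Phi (a * (s - t) + p) * phi s
      = ∫ s, (gaussianReal 0 1).real (Iic (p - a * t - -a * s)) ∂gaussianReal 0 1 := by
        rw [integral_mul_phi]
        congr with s
        rw [Phi_eq_gaussianReal_real_Iic]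
        congr 2
        ring
    _ = ((gaussianReal 0 1).map (-a * ·) ∗ gaussianReal 0 1).real (Iic (p - a * t)) := by
        rw [Measure.conv_real_Iic, integral_map (by fun_prop)]
        exact (Measure.antitone_apply_Iic_sub _ _).measurable.ennreal_toReal.aestronglyMeasurable
    _ = Phi ((p - a * t) / √(1 + a ^ 2)) := by
        rw [gaussianReal_map_const_mul, gaussianReal_conv_gaussianReal, mul_zero, add_zero,
          gaussianReal_real_Iic (by positivity)]
        congr 3
        simp [add_comm]
end

section
/- For all real numbers a, t, p, the integral ∫_{-∞}^{t} φ(a(s-t)+p)·φ(s) ds equals (1/√(1+a²))·φ((p-at)/√(1+a²))·Φ((t+ap)/√(1+a²)). -/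
open Real MeasureTheory Set Filter

lemma phi_mul_phi {u v u' v' : ℝ} (h : u ^ 2 + v ^ 2 = u' ^ 2 + v' ^ 2) :
    phi u * phi v = phi u' * phi v' := by
  simp only [phi, div_mul_div_comm, ← Real.exp_add]
  congr 2
  linarith

lemma integral_Iic_comp_affine (f : ℝ → ℝ) {b : ℝ} (hb : 0 < b) (d t : ℝ) :
    ∫ s in Set.Iic t, f (b * s + d) = b⁻¹ * ∫ u in Set.Iic (b * t + d), f u := by
  have A : MeasurableEmbedding (fun x : ℝ => b * x + d) := by
    have : (fun x : ℝ => b * x + d) = (fun x : ℝ => x + d) ∘ (fun x : ℝ => b * x) := rfl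
    rw [this]
    exact (measurableEmbedding_addRight d).comp (measurableEmbedding_mulLeft₀ hb.ne')
  have hmap : Measure.map (fun x : ℝ => b * x + d) volume
      = ENNReal.ofReal b⁻¹ • volume := by
    have hc : (fun x : ℝ => b * x + d) = (fun x : ℝ => x + d) ∘ (fun x : ℝ => b * x) := rfl
    rw [hc, ← Measure.map_map (measurable_add_const d) (measurable_const_mul b)]
    have : Measure.map (fun x : ℝ => b * x) volume = Measure.map (b * ·) volume := rfl
    rw [this, Real.map_volume_mul_left hb.ne', Measure.map_smul,
      abs_of_pos (inv_pos.2 hb)]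
    congr 1
    exact map_add_right_eq_self volume d
  have hpre : (fun x : ℝ => b * x + d) ⁻¹' Set.Iic (b * t + d) = Set.Iic t := by
    ext x
    simp only [Set.mem_preimage, Set.mem_Iic]
    constructor
    · intro hx; nlinarith
    · intro hx; nlinarith
  have h := A.setIntegral_map (μ := volume) f (Set.Iic (b * t + d))
  rw [hmap, hpre] at h
  rw [Measure.restrict_smul, integral_smul_measure, ENNReal.toReal_ofReal
    (inv_nonneg.2 hb.le), smul_eq_mul] at h
  exact h.symm

theorem stmt_1 (a t p : ℝ) :
    ∫ s in Set.Iic t, phi (a * (s - t) + p) * phi s =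
      (1 / Real.sqrt (1 + a ^ 2)) * phi ((p - a * t) / Real.sqrt (1 + a ^ 2)) *
        Phi ((t + a * p) / Real.sqrt (1 + a ^ 2)) := by
  set b := Real.sqrt (1 + a ^ 2) with hbdef
  have hb : 0 < b := Real.sqrt_pos.2 (by positivity)
  have hb2 : b ^ 2 = 1 + a ^ 2 := Real.sq_sqrt (by positivity)
  set d := a * (p - a * t) / b with hddef
  have key : ∀ s : ℝ, phi (a * (s - t) + p) * phi s =
      phi ((p - a * t) / b) * phi (b * s + d) := by
    intro s
    apply phi_mul_phi
    rw [hddef]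
    field_simp
    linear_combination ((p - a * t) ^ 2 - b ^ 2 * s ^ 2) * hb2
  calc ∫ s in Set.Iic t, phi (a * (s - t) + p) * phi s
      = ∫ s in Set.Iic t, phi ((p - a * t) / b) * phi (b * s + d) := by
        exact integral_congr_ae (Filter.Eventually.of_forall fun s => key s)
    _ = phi ((p - a * t) / b) * ∫ s in Set.Iic t, phi (b * s + d) :=
        integral_const_mul _ _
    _ = phi ((p - a * t) / b) * (b⁻¹ * ∫ u in Set.Iic (b * t + d), phi u) := by
        rw [integral_Iic_comp_affine phi hb d t]
    _ = (1 / b) * phi ((p - a * t) / b) * Phi ((t + a * p) / b) := by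
        have harg : b * t + d = (t + a * p) / b := by
          rw [hddef]
          field_simp
          linear_combination t * hb2
        rw [harg, Phi]
        ring
end

section
/- For all real numbers a, t, p, setting P = (p-at)/√(1+a²) and Q = (t+ap)/√(1+a²), one has ∫_{-∞}^{t} φ(a(s-t)+p)·φ(s)·(s-t) ds = −(φ(P)·(φ(Q) + Q·Φ(Q)))/(1+a²). -/
open Real MeasureTheory Set Filter

/-! Completing the square, `φ(a(s - t) + p) φ(s) = φ(P) φ(c s + a P)` with `c = √(1 + a²)`, turns
the integrand into a Gaussian in `v = c s + a P`; the upper limit becomes `c t + a P = Q` and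
`s - t = (v - Q) / c`. What remains is `c⁻² ∫_{-∞}^Q (v - Q) φ(v) dv`, and `φ' = -v φ` gives
`∫_{-∞}^Q v φ(v) dv = -φ(Q)`. -/

theorem integral_Iic_comp_mul_add {E : Type*} [NormedAddCommGroup E] [NormedSpace ℝ E]
    (g : ℝ → E) (t d : ℝ) {b : ℝ} (hb : 0 < b) :
    ∫ s in Iic t, g (b * s + d) = b⁻¹ • ∫ v in Iic (b * t + d), g v := by
  have hpre : (fun s => b * s + d) ⁻¹' Iic (b * t + d) = Iic t := by
    ext s
    simp [mul_le_mul_iff_of_pos_left hb]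
  rw [← integral_indicator measurableSet_Iic, ← integral_indicator measurableSet_Iic, ← hpre]
  calc ∫ s, ((fun s => b * s + d) ⁻¹' Iic (b * t + d)).indicator (fun s => g (b * s + d)) s
      = ∫ s, (fun x => (Iic (b * t + d)).indicator g (x + d)) (b * s) :=
        integral_congr_ae (.of_forall fun s => indicator_comp_right (fun s => b * s + d))
    _ = b⁻¹ • ∫ v, (Iic (b * t + d)).indicator g v := by
        rw [Measure.integral_comp_mul_left (fun x => (Iic (b * t + d)).indicator g (x + d)),
          integral_add_right_eq_self, abs_of_pos (inv_pos.2 hb)]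

lemma phi_mul_phi_of_sq_add_sq_eq {x y u w : ℝ} (h : x ^ 2 + y ^ 2 = u ^ 2 + w ^ 2) :
    phi x * phi y = phi u * phi w := by
  simp only [phi, div_mul_div_comm, ← exp_add]
  congr 2
  linarith

lemma hasDerivAt_phi (x : ℝ) : HasDerivAt phi (-x * phi x) x := by
  refine (((hasDerivAt_pow 2 x).neg.div_const 2).exp.div_const (√(2 * π))).congr_deriv ?_
  simp only [phi, Pi.neg_apply]
  ring

lemma integrable_phi : Integrable phi :=
  ((integrable_exp_neg_mul_sq one_half_pos).div_const (√(2 * π))).congr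
    (.of_forall fun x => by simp only [phi]; ring_nf)

lemma integrable_mul_phi : Integrable fun x => x * phi x :=
  ((integrable_mul_exp_neg_mul_sq one_half_pos).div_const (√(2 * π))).congr
    (.of_forall fun x => by simp only [phi]; ring_nf)

lemma tendsto_phi_atBot : Tendsto phi atBot (nhds 0) :=
  tendsto_zero_of_hasDerivAt_of_integrableOn_Iic (a := 0) (fun x _ => hasDerivAt_phi x)
    (integrable_mul_phi.neg.congr (.of_forall fun x => by simp)).integrableOn
    integrable_phi.integrableOn

lemma integral_Iic_mul_phi (q : ℝ) : ∫ v in Iic q, v * phi v = -phi q := by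
  simpa using integral_Iic_of_hasDerivAt_of_tendsto' (f := -phi)
    (fun x _ => by simpa using (hasDerivAt_phi x).neg) integrable_mul_phi.integrableOn
    tendsto_phi_atBot.neg

lemma integral_Iic_sub_mul_phi (q : ℝ) :
    ∫ v in Iic q, (v - q) * phi v = -(phi q + q * Phi q) := by
  simp only [sub_mul]
  rw [integral_sub integrable_mul_phi.integrableOn (integrable_phi.const_mul q).integrableOn,
    integral_const_mul, integral_Iic_mul_phi, Phi]
  ring

theorem stmt_2 (a t p P Q : ℝ)
    (hP : P = (p - a * t) / Real.sqrt (1 + a ^ 2))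
    (hQ : Q = (t + a * p) / Real.sqrt (1 + a ^ 2)) :
    ∫ s in Set.Iic t, phi (a * (s - t) + p) * phi s * (s - t) =
      -(phi P * (phi Q + Q * Phi Q)) / (1 + a ^ 2) := by
  set c := √(1 + a ^ 2)
  have hc : 0 < c := by positivity
  have hc2 : c ^ 2 = 1 + a ^ 2 := sq_sqrt (by positivity)
  have hPc : c * P = p - a * t := by rw [hP]; field_simp
  have hQc : c * t + a * P = Q := by
    rw [hQ]; field_simp; linear_combination t * hc2 + a * hPc
  have hintegrand : ∀ s, phi (a * (s - t) + p) * phi s * (s - t) =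
      phi P * (c⁻¹ * ((c * s + a * P - Q) * phi (c * s + a * P))) := by
    intro s
    rw [phi_mul_phi_of_sq_add_sq_eq (u := P) (w := c * s + a * P)
      (by linear_combination (P ^ 2 - s ^ 2) * hc2 - (p - a * t + c * P + 2 * a * s) * hPc),
      ← hQc]
    field_simp
    ring
  rw [setIntegral_congr_fun measurableSet_Iic (fun s _ => hintegrand s), integral_const_mul,
    integral_const_mul, integral_Iic_comp_mul_add (fun v => (v - Q) * phi v) t (a * P) hc, hQc,
    integral_Iic_sub_mul_phi, smul_eq_mul, ← hc2]
  field_simp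
end

section
/- For all real t, p and a₁ < a₂, one has ∫_{-∞}^{t} Φ(a₂(s-t)+p)·φ(s) ds < ∫_{-∞}^{t} Φ(a₁(s-t)+p)·φ(s) ds; i.e., the map a ↦ ∫_{-∞}^{t} Φ(a(s-t)+p)·φ(s) ds is strictly decreasing. -/
open Real MeasureTheory Set Filter

lemma phi_pos (s : ℝ) : 0 < phi s :=
  div_pos (Real.exp_pos _) (Real.sqrt_pos.2 (by positivity))

lemma phi_cont : Continuous phi := by
  unfold phi; fun_prop

lemma phi_eq : phi = fun s : ℝ => Real.exp (-(1/2 : ℝ) * s ^ 2) / Real.sqrt (2 * Real.pi) := by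
  funext s
  unfold phi
  ring_nf

lemma phi_intOn (s : Set ℝ) : IntegrableOn phi s := integrable_phi.integrableOn

lemma Phi_strictMono : StrictMono Phi := by
  intro x y hxy
  have hx := phi_intOn (Iic x)
  have hy := phi_intOn (Iic y)
  have := intervalIntegral.integral_Iic_sub_Iic (μ := volume) (f := phi) hx hy
  have hpos : 0 < ∫ u in x..y, phi u :=
    intervalIntegral.intervalIntegral_pos_of_pos (phi_cont.intervalIntegrable x y) phi_pos hxy
  have : Phi y - Phi x = ∫ u in x..y, phi u := this
  linarith

lemma Phi_nonneg (x : ℝ) : 0 ≤ Phi x :=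
  setIntegral_nonneg measurableSet_Iic fun s _ => (phi_pos s).le

lemma Phi_le (x : ℝ) : Phi x ≤ ∫ s, phi s :=
  setIntegral_le_integral integrable_phi (Eventually.of_forall fun s => (phi_pos s).le)

lemma Phi_measurable : Measurable Phi :=
  (Phi_strictMono.monotone).measurable

lemma integrableOn_aux (t p a : ℝ) :
    IntegrableOn (fun s => Phi (a * (s - t) + p) * phi s) (Set.Iic t) := by
  have hmeas : Measurable fun s => Phi (a * (s - t) + p) * phi s :=
    (Phi_measurable.comp (by measurability)).mul phi_cont.measurable
  refine Integrable.mono ((integrable_phi.const_mul (∫ s, phi s)).integrableOn)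
    hmeas.aestronglyMeasurable (Eventually.of_forall fun s => ?_)
  simp only [Real.norm_eq_abs, abs_mul]
  rw [abs_of_nonneg (Phi_nonneg _), abs_of_nonneg (phi_pos s).le,
    abs_of_nonneg (integral_nonneg fun u => (phi_pos u).le)]
  exact mul_le_mul_of_nonneg_right (Phi_le _) (phi_pos s).le

theorem stmt_4 (t p a₁ a₂ : ℝ) (h : a₁ < a₂) :
    ∫ s in Set.Iic t, Phi (a₂ * (s - t) + p) * phi s <
      ∫ s in Set.Iic t, Phi (a₁ * (s - t) + p) * phi s := by
  set d : ℝ → ℝ := fun s => Phi (a₁ * (s - t) + p) * phi s - Phi (a₂ * (s - t) + p) * phi s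
    with hd
  have h1 := integrableOn_aux t p a₁
  have h2 := integrableOn_aux t p a₂
  have hdi : IntegrableOn d (Set.Iic t) := h1.sub h2
  have hnonneg : ∀ s ∈ Set.Iic t, 0 ≤ d s := by
    intro s hs
    rcases lt_or_eq_of_le (mem_Iic.mp hs) with hlt | heq
    · have hst : s - t < 0 := by linarith
      have : a₁ * (s - t) > a₂ * (s - t) := by nlinarith
      have := Phi_strictMono (show a₂ * (s - t) + p < a₁ * (s - t) + p by linarith)
      have := phi_pos s
      simp only [hd]
      nlinarith
    · simp [hd, heq]
  have hae : 0 ≤ᵐ[volume.restrict (Set.Iic t)] d :=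
    (ae_restrict_iff' measurableSet_Iic).2 (Eventually.of_forall hnonneg)
  have hsupp : Set.Iio t ⊆ Function.support d ∩ Set.Iic t := by
    intro s hs
    have hst : s - t < 0 := by simpa [sub_neg] using hs
    have hlt : a₂ * (s - t) + p < a₁ * (s - t) + p := by nlinarith
    have hP := Phi_strictMono hlt
    have hφ := phi_pos s
    refine ⟨?_, le_of_lt (mem_Iio.mp hs)⟩
    simp only [Function.mem_support, hd]
    nlinarith
  have hpos : 0 < ∫ s in Set.Iic t, d s := by
    refine (setIntegral_pos_iff_support_of_nonneg_ae hae hdi).2 ?_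
    refine lt_of_lt_of_le ?_ (measure_mono hsupp)
    simp [Real.volume_Iio]
  have := integral_sub h1 h2
  have heq : ∫ s in Set.Iic t, d s =
      (∫ s in Set.Iic t, Phi (a₁ * (s - t) + p) * phi s) -
        ∫ s in Set.Iic t, Phi (a₂ * (s - t) + p) * phi s := this
  linarith
end

section
/- For all real t, p, the function a ↦ ∫_{-∞}^{t} Φ(a(s-t)+p)·φ(s) ds tends to Φ(t) as a → −∞ and to 0 as a → +∞. -/
open Real MeasureTheory Set Filter

lemma phi_eq_s5 : phi = ProbabilityTheory.gaussianPDFReal 0 1 := by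
  funext x
  simp [phi, ProbabilityTheory.gaussianPDFReal, div_eq_inv_mul, neg_div]

lemma phi_nonneg (s : ℝ) : 0 ≤ phi s := by
  rw [phi_eq_s5]; exact ProbabilityTheory.gaussianPDFReal_nonneg 0 1 s

lemma measurable_phi : Measurable phi := by
  rw [phi_eq_s5]; exact ProbabilityTheory.measurable_gaussianPDFReal 0 1

lemma lintegral_phi : ∫⁻ x, ENNReal.ofReal (phi x) = 1 := by
  rw [phi_eq_s5]; exact ProbabilityTheory.lintegral_gaussianPDFReal_eq_one 0 one_ne_zero

noncomputable def nu : Measure ℝ := volume.withDensity (fun s => ENNReal.ofReal (phi s))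

lemma nu_univ : nu univ = 1 := by
  rw [nu, withDensity_apply _ MeasurableSet.univ, Measure.restrict_univ, lintegral_phi]

lemma nu_Iic (x : ℝ) : nu (Iic x) = ENNReal.ofReal (Phi x) := by
  rw [nu, withDensity_apply _ measurableSet_Iic, Phi,
    ← ofReal_integral_eq_lintegral_ofReal (integrable_phi.integrableOn)
      (Eventually.of_forall phi_nonneg)]

lemma Phi_eq_toReal (x : ℝ) : Phi x = (nu (Iic x)).toReal := by
  rw [nu_Iic, ENNReal.toReal_ofReal (Phi_nonneg x)]

lemma tendsto_Phi_atTop : Tendsto Phi atTop (nhds 1) := by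
  have h := tendsto_measure_Iic_atTop (α := ℝ) nu
  rw [nu_univ] at h
  have h2 := (ENNReal.tendsto_toReal ENNReal.one_ne_top).comp h
  simp only [ENNReal.toReal_one] at h2
  refine h2.congr fun x => ?_
  exact (Phi_eq_toReal x).symm

lemma tendsto_Phi_atBot : Tendsto Phi atBot (nhds 0) := by
  have h : Tendsto (nu ∘ Iic) atBot (nhds (nu (⋂ x : ℝ, Iic x))) := by
    refine tendsto_measure_iInter_atBot (fun x => measurableSet_Iic.nullMeasurableSet)
      (fun a b hab => Iic_subset_Iic.2 hab) ⟨0, ?_⟩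
    rw [nu_Iic]; exact ENNReal.ofReal_ne_top
  have hempty : (⋂ x : ℝ, Iic x) = ∅ := by
    ext y; simp only [mem_iInter, mem_Iic, mem_empty_iff_false, iff_false, not_forall, not_le]
    exact ⟨y - 1, by linarith⟩
  rw [hempty, measure_empty] at h
  have h2 := (ENNReal.tendsto_toReal ENNReal.zero_ne_top).comp h
  simp only [ENNReal.toReal_zero] at h2
  refine h2.congr fun x => ?_
  exact (Phi_eq_toReal x).symm

lemma Phi_mono : Monotone Phi := fun a b hab =>
  setIntegral_mono_set integrable_phi.integrableOn
    (Eventually.of_forall phi_nonneg) (HasSubset.Subset.eventuallyLE (Iic_subset_Iic.2 hab))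

lemma Phi_le_one (x : ℝ) : Phi x ≤ 1 := by
  have := Phi_eq_toReal x
  rw [this]
  have h : nu (Iic x) ≤ 1 := nu_univ ▸ measure_mono (subset_univ _)
  calc (nu (Iic x)).toReal ≤ (1 : ENNReal).toReal :=
        ENNReal.toReal_mono ENNReal.one_ne_top h
    _ = 1 := ENNReal.toReal_one

lemma meas_aux (t p a : ℝ) :
    AEStronglyMeasurable (fun s => Phi (a * (s - t) + p) * phi s)
      (volume.restrict (Iic t)) := by
  have h1 : Measurable Phi := Phi_mono.measurable
  exact ((h1.comp ((measurable_id.sub_const t).const_mul a |>.add_const p)).mul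
    measurable_phi).aestronglyMeasurable

theorem stmt_5 (t p : ℝ) :
    Tendsto (fun a => ∫ s in Set.Iic t, Phi (a * (s - t) + p) * phi s) atBot (nhds (Phi t)) ∧
    Tendsto (fun a => ∫ s in Set.Iic t, Phi (a * (s - t) + p) * phi s) atTop (nhds 0) := by
  have hbound : ∀ (a : ℝ), ∀ᵐ s ∂(volume.restrict (Iic t)),
      ‖Phi (a * (s - t) + p) * phi s‖ ≤ phi s := by
    intro a
    refine Eventually.of_forall fun s => ?_
    rw [Real.norm_eq_abs, abs_of_nonneg (mul_nonneg (Phi_nonneg _) (phi_nonneg _))]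
    calc Phi (a * (s - t) + p) * phi s ≤ 1 * phi s :=
          mul_le_mul_of_nonneg_right (Phi_le_one _) (phi_nonneg s)
      _ = phi s := one_mul _
  have hlt : ∀ᵐ s ∂(volume.restrict (Iic t)), s < t := by
    have : ∀ᵐ s ∂(volume.restrict (Iic t)), s ≠ t := by
      refine ae_restrict_of_ae ?_
      have : (volume : Measure ℝ) {t} = 0 := measure_singleton t
      filter_upwards [measure_eq_zero_iff_ae_notMem.mp this] with s hs
      simpa using hs
    filter_upwards [this, ae_restrict_mem measurableSet_Iic] with s h1 h2
    exact lt_of_le_of_ne h2 h1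
  constructor
  · -- a → -∞ : integrand → phi s, integral → Phi t
    have key : Tendsto (fun a => ∫ s in Set.Iic t, Phi (a * (s - t) + p) * phi s) atBot
        (nhds (∫ s in Set.Iic t, phi s)) := by
      refine tendsto_integral_filter_of_dominated_convergence phi
        (Eventually.of_forall fun a => meas_aux t p a)
        (Eventually.of_forall hbound) integrable_phi.integrableOn ?_
      filter_upwards [hlt] with s hs
      have harg : Tendsto (fun a : ℝ => a * (s - t) + p) atBot atTop := by
        have : Tendsto (fun a : ℝ => a * (s - t)) atBot atTop :=
          tendsto_atBot_atTop_of_antitone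
            (fun x y hxy => by nlinarith)
            (fun b => ⟨(b : ℝ) / (s - t), by
              rw [div_mul_cancel₀]
              linarith⟩)
        exact tendsto_atTop_add_const_right _ p this
      have := (tendsto_Phi_atTop.comp harg).mul_const (phi s)
      simpa using this
    rwa [show (∫ s in Set.Iic t, phi s) = Phi t from rfl] at key
  · -- a → +∞ : integrand → 0
    have key : Tendsto (fun a => ∫ s in Set.Iic t, Phi (a * (s - t) + p) * phi s) atTop
        (nhds (∫ _ in Set.Iic t, (0 : ℝ))) := by
      refine tendsto_integral_filter_of_dominated_convergence phi
        (Eventually.of_forall fun a => meas_aux t p a)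
        (Eventually.of_forall hbound) integrable_phi.integrableOn ?_
      filter_upwards [hlt] with s hs
      have harg : Tendsto (fun a : ℝ => a * (s - t) + p) atTop atBot := by
        have : Tendsto (fun a : ℝ => a * (s - t)) atTop atBot :=
          tendsto_atTop_atBot_of_antitone
            (fun x y hxy => by nlinarith)
            (fun b => ⟨(b : ℝ) / (s - t), by
              rw [div_mul_cancel₀]
              linarith⟩)
        exact tendsto_atBot_add_const_right _ p this
      have := (tendsto_Phi_atBot.comp harg).mul_const (phi s)
      simpa using this
    simpa using key
end
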